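/- The system ECNZ^Δ is strongly complete with respect to the class of all (cnz)-frames: every ECNZ^Δ-consistent set of formulas is satisfiable at some state of some neighborhood model whose neighborhood function at every state is closed under binary intersections, contains the unit S, and is closed under complements. -/

import Mathlib

/-- The language L(Δ) of contingency logic: φ ::= p | ¬φ | (φ ∧ φ) | Δφ. -/
inductive Formula (P : Type) : Type
  | atom : P → Formula P
  | neg : Formula P → Formula P
  | and : Formula P → Formula P → Formula P
  | delta : Formula P → Formula P

namespace Formula

variable {P : Type}

/-- φ ∨ ψ abbreviates ¬(¬φ ∧ ¬ψ). -/
def or (φ ψ : Formula P) : Formula P := neg (and (neg φ) (neg ψ))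

/-- φ → ψ abbreviates ¬(φ ∧ ¬ψ). -/
def imp (φ ψ : Formula P) : Formula P := neg (and φ (neg ψ))

/-- φ ↔ ψ abbreviates (φ → ψ) ∧ (ψ → φ). -/
def iffF (φ ψ : Formula P) : Formula P := and (imp φ ψ) (imp ψ φ)

end Formula

/-- ⊤ : a fixed tautology (p ∨ ¬p for a fixed propositional variable p). -/
noncomputable def Formula.top (P : Type) [Nonempty P] : Formula P :=
  Formula.or (Formula.atom (Classical.arbitrary P))
    (Formula.neg (Formula.atom (Classical.arbitrary P)))

/-- A neighborhood model ⟨S, N, V⟩: a nonempty set of states `S`, a neighborhood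
function `N : S → P(P(S))` and a valuation `V`. -/
structure NbhdModel (P : Type) where
  S : Type
  nonempty : Nonempty S
  N : S → Set (Set S)
  V : P → Set S

/-- The truth set ⟦φ⟧ of a formula in a neighborhood model; the clause for `Δφ` says
that a state `s` satisfies `Δφ` iff ⟦φ⟧ ∈ N(s) or S ∖ ⟦φ⟧ ∈ N(s). -/
def NbhdModel.truthSet {P : Type} (M : NbhdModel P) : Formula P → Set M.S
  | .atom p => M.V p
  | .neg φ => (M.truthSet φ)ᶜ
  | .and φ ψ => M.truthSet φ ∩ M.truthSet ψ
  | .delta φ => {s | M.truthSet φ ∈ M.N s ∨ (M.truthSet φ)ᶜ ∈ M.N s}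

/-- Satisfaction: M,s ⊨ φ. -/
def NbhdModel.sat {P : Type} (M : NbhdModel P) (s : M.S) (φ : Formula P) : Prop :=
  s ∈ M.truthSet φ

/-- Frame property (m): closure under supersets. -/
def SupersetClosed {S : Type} (N : S → Set (Set S)) : Prop :=
  ∀ s : S, ∀ X Y : Set S, X ∈ N s → X ⊆ Y → Y ∈ N s

/-- Frame property (c): closure under binary intersections. -/
def InterClosed {S : Type} (N : S → Set (Set S)) : Prop :=
  ∀ s : S, ∀ X Y : Set S, X ∈ N s → Y ∈ N s → X ∩ Y ∈ N s

/-- Frame property (n): contains the unit. -/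
def ContainsUnit {S : Type} (N : S → Set (Set S)) : Prop :=
  ∀ s : S, (Set.univ : Set S) ∈ N s

/-- Frame property (z): closure under complements. -/
def ComplClosed {S : Type} (N : S → Set (Set S)) : Prop :=
  ∀ s : S, ∀ X : Set S, X ∈ N s → Xᶜ ∈ N s

/-- The supplementation of a neighborhood function:
`N⁺(s) = {X ⊆ S : Y ⊆ X for some Y ∈ N(s)}`. -/
def suppN {S : Type} (N : S → Set (Set S)) (s : S) : Set (Set S) :=
  {X | ∃ Y ∈ N s, Y ⊆ X}

/-- `φ` is a substitution instance of a propositional tautology: every Boolean valuation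
of formulas that respects `¬` and `∧` (treating atoms and Δ-formulas as atomic) makes
`φ` true. -/
def Tautology {P : Type} (φ : Formula P) : Prop :=
  ∀ v : Formula P → Bool,
    (∀ ψ, v (Formula.neg ψ) = !(v ψ)) →
    (∀ ψ χ, v (Formula.and ψ χ) = (v ψ && v χ)) →
    v φ = true

/-- Derivability in the system E^Δ (TAUT + ΔEqu + MP + REΔ) extended with the
additional axioms in `Ax`. -/
inductive Deriv {P : Type} (Ax : Set (Formula P)) : Formula P → Prop
  | ax {φ} (h : φ ∈ Ax) : Deriv Ax φ
  | taut {φ} (h : Tautology φ) : Deriv Ax φ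
  | equ (φ) : Deriv Ax (Formula.iffF (Formula.delta φ) (Formula.delta (Formula.neg φ)))
  | mp {φ ψ} (h1 : Deriv Ax (Formula.imp φ ψ)) (h2 : Deriv Ax φ) : Deriv Ax ψ
  | re {φ ψ} (h : Deriv Ax (Formula.iffF φ ψ)) :
      Deriv Ax (Formula.iffF (Formula.delta φ) (Formula.delta ψ))

/-- Derivability of `φ` from the set of premises `Γ` in the system E^Δ + `Ax`. -/
inductive DerivFrom {P : Type} (Ax Γ : Set (Formula P)) : Formula P → Prop
  | mem {φ} (h : φ ∈ Γ) : DerivFrom Ax Γ φ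
  | thm {φ} (h : Deriv Ax φ) : DerivFrom Ax Γ φ
  | mp {φ ψ} (h1 : DerivFrom Ax Γ (Formula.imp φ ψ)) (h2 : DerivFrom Ax Γ φ) :
      DerivFrom Ax Γ ψ

/-- `Γ` is consistent in the system E^Δ + `Ax`: no contradiction is derivable from `Γ`. -/
def Consistent {P : Type} (Ax Γ : Set (Formula P)) : Prop :=
  ¬ ∃ φ : Formula P, DerivFrom Ax Γ φ ∧ DerivFrom Ax Γ (Formula.neg φ)

/-- The axiom ΔM: all instances of Δφ → Δ(φ ∨ ψ) ∨ Δ(¬φ ∨ χ). -/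
def AxDeltaM {P : Type} : Set (Formula P) :=
  {f | ∃ φ ψ χ : Formula P,
     f = Formula.imp (Formula.delta φ)
           (Formula.or (Formula.delta (Formula.or φ ψ))
                       (Formula.delta (Formula.or (Formula.neg φ) χ)))}

/-- The axiom ΔC: all instances of (Δφ ∧ Δψ) → Δ(φ ∧ ψ). -/
def AxDeltaC {P : Type} : Set (Formula P) :=
  {f | ∃ φ ψ : Formula P,
     f = Formula.imp (Formula.and (Formula.delta φ) (Formula.delta ψ))
           (Formula.delta (Formula.and φ ψ))}

/-- The axiom ΔN: Δ⊤. -/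
noncomputable def AxDeltaN (P : Type) [Nonempty P] : Set (Formula P) :=
  {Formula.delta (Formula.top P)}

/-!
Canonical model argument. A state is a maximal consistent set `s`, and its neighborhoods
are the proof sets `|φ| = {t | φ ∈ t}` with `Δφ ∈ s`. Rule REΔ makes `|φ| ∈ N(s) ↔ Δφ ∈ s`,
and since `|¬φ| = |φ|ᶜ` the axiom ΔEqu gives both the truth lemma for `Δ` and closure
under complements, while ΔC and ΔN give closure under intersections and the unit.
-/

open Formula

variable {P : Type} {Ax Γ : Set (Formula P)} {φ ψ : Formula P}

namespace Tautology

lemma imp_self (φ : Formula P) : Tautology (φ.imp φ) := by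
  intro v hn ha
  simp only [imp, hn, ha]
  cases v φ <;> rfl

lemma imp_imp_left (φ ψ : Formula P) : Tautology (φ.imp (ψ.imp φ)) := by
  intro v hn ha
  simp only [imp, hn, ha]
  cases v φ <;> cases v ψ <;> rfl

lemma imp_imp_distrib (φ ψ χ : Formula P) :
    Tautology ((φ.imp (ψ.imp χ)).imp ((φ.imp ψ).imp (φ.imp χ))) := by
  intro v hn ha
  simp only [imp, hn, ha]
  cases v φ <;> cases v ψ <;> cases v χ <;> rfl

lemma imp_neg_of_imp_of_imp_neg (φ ψ : Formula P) :
    Tautology ((φ.imp ψ).imp ((φ.imp ψ.neg).imp φ.neg)) := by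
  intro v hn ha
  simp only [imp, hn, ha]
  cases v φ <;> cases v ψ <;> rfl

lemma neg_neg_imp (φ : Formula P) : Tautology (φ.neg.neg.imp φ) := by
  intro v hn ha
  simp only [imp, hn, ha]
  cases v φ <;> rfl

lemma imp_imp_and (φ ψ : Formula P) : Tautology (φ.imp (ψ.imp (φ.and ψ))) := by
  intro v hn ha
  simp only [imp, hn, ha]
  cases v φ <;> cases v ψ <;> rfl

lemma and_imp_left (φ ψ : Formula P) : Tautology ((φ.and ψ).imp φ) := by
  intro v hn ha
  simp only [imp, hn, ha]
  cases v φ <;> cases v ψ <;> rfl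

lemma and_imp_right (φ ψ : Formula P) : Tautology ((φ.and ψ).imp ψ) := by
  intro v hn ha
  simp only [imp, hn, ha]
  cases v φ <;> cases v ψ <;> rfl

lemma top [Nonempty P] : Tautology (Formula.top P) := by
  intro v hn ha
  simp only [Formula.top, Formula.or, hn, ha]
  cases v (atom (Classical.arbitrary P)) <;> rfl

end Tautology

namespace DerivFrom

lemma of_tautology_imp (ht : Tautology (φ.imp ψ)) (h : DerivFrom Ax Γ φ) :
    DerivFrom Ax Γ ψ :=
  .mp (.thm (.taut ht)) h

lemma mono {Δ : Set (Formula P)} (hΓΔ : Γ ⊆ Δ) (h : DerivFrom Ax Γ φ) :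
    DerivFrom Ax Δ φ := by
  induction h with
  | mem hm => exact .mem (hΓΔ hm)
  | thm ht => exact .thm ht
  | mp _ _ ih₁ ih₂ => exact ih₁.mp ih₂

lemma deriv_of_empty (h : DerivFrom Ax ∅ φ) : Deriv Ax φ := by
  induction h with
  | mem hm => exact absurd hm (Set.notMem_empty _)
  | thm ht => exact ht
  | mp _ _ ih₁ ih₂ => exact ih₁.mp ih₂

lemma deduction (h : DerivFrom Ax (insert φ Γ) ψ) : DerivFrom Ax Γ (φ.imp ψ) := by
  induction h with
  | @mem ψ hm =>
    rcases hm with rfl | hm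
    · exact .thm (.taut (Tautology.imp_self ψ))
    · exact of_tautology_imp (Tautology.imp_imp_left ψ φ) (.mem hm)
  | @thm ψ ht => exact of_tautology_imp (Tautology.imp_imp_left ψ φ) (.thm ht)
  | @mp ψ χ _ _ ih₁ ih₂ =>
    exact (of_tautology_imp (Tautology.imp_imp_distrib φ ψ χ) ih₁).mp ih₂

lemma neg_of_not_consistent_insert (h : ¬ Consistent Ax (insert φ Γ)) :
    DerivFrom Ax Γ φ.neg := by
  obtain ⟨ψ, hψ, hnψ⟩ := not_not.mp h
  exact (of_tautology_imp (Tautology.imp_neg_of_imp_of_imp_neg φ ψ) hψ.deduction).mp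
    hnψ.deduction

lemma exists_mem_of_isChain {c : Set (Set (Formula P))} (hc : IsChain (· ⊆ ·) c)
    (hne : c.Nonempty) (h : DerivFrom Ax (⋃₀ c) φ) : ∃ Δ ∈ c, DerivFrom Ax Δ φ := by
  induction h with
  | mem hm =>
    obtain ⟨Δ, hΔ, hφΔ⟩ := hm
    exact ⟨Δ, hΔ, .mem hφΔ⟩
  | thm ht => exact ⟨hne.some, hne.some_mem, .thm ht⟩
  | mp _ _ ih₁ ih₂ =>
    obtain ⟨Δ₁, hΔ₁, hd₁⟩ := ih₁
    obtain ⟨Δ₂, hΔ₂, hd₂⟩ := ih₂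
    rcases hc.total hΔ₁ hΔ₂ with h₁₂ | h₂₁
    · exact ⟨Δ₂, hΔ₂, (hd₁.mono h₁₂).mp hd₂⟩
    · exact ⟨Δ₁, hΔ₁, hd₁.mp (hd₂.mono h₂₁)⟩

end DerivFrom

lemma consistent_sUnion_of_isChain {c : Set (Set (Formula P))} (hc : IsChain (· ⊆ ·) c)
    (hne : c.Nonempty) (hcon : ∀ Δ ∈ c, Consistent Ax Δ) : Consistent Ax (⋃₀ c) := by
  rintro ⟨φ, hφ, hnφ⟩
  obtain ⟨Δ₁, hΔ₁, hd₁⟩ := DerivFrom.exists_mem_of_isChain hc hne hφ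
  obtain ⟨Δ₂, hΔ₂, hd₂⟩ := DerivFrom.exists_mem_of_isChain hc hne hnφ
  rcases hc.total hΔ₁ hΔ₂ with h₁₂ | h₂₁
  · exact hcon Δ₂ hΔ₂ ⟨φ, hd₁.mono h₁₂, hd₂⟩
  · exact hcon Δ₁ hΔ₁ ⟨φ, hd₁, hd₂.mono h₂₁⟩

def MaximalConsistent (Ax s : Set (Formula P)) : Prop :=
  Maximal (Consistent Ax) s

theorem Consistent.exists_maximalConsistent_superset (h : Consistent Ax Γ) :
    ∃ s, Γ ⊆ s ∧ MaximalConsistent Ax s :=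
  zorn_subset_nonempty {Δ | Consistent Ax Δ}
    (fun c hcS hc hne => ⟨⋃₀ c, consistent_sUnion_of_isChain hc hne hcS,
      fun _ => Set.subset_sUnion_of_mem⟩) Γ h

namespace MaximalConsistent

variable {s : Set (Formula P)}

lemma mem_of_consistent_insert (hs : MaximalConsistent Ax s) (h : Consistent Ax (insert φ s)) :
    φ ∈ s :=
  hs.2 h (Set.subset_insert φ s) (Set.mem_insert φ s)

lemma mem_of_derivFrom (hs : MaximalConsistent Ax s) (h : DerivFrom Ax s φ) : φ ∈ s :=
  hs.mem_of_consistent_insert fun ⟨ψ, hψ, hnψ⟩ =>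
    hs.1 ⟨ψ, hψ.deduction.mp h, hnψ.deduction.mp h⟩

lemma mem_of_deriv (hs : MaximalConsistent Ax s) (h : Deriv Ax φ) : φ ∈ s :=
  hs.mem_of_derivFrom (.thm h)

lemma neg_mem_iff (hs : MaximalConsistent Ax s) : φ.neg ∈ s ↔ φ ∉ s :=
  ⟨fun hn hφ => hs.1 ⟨φ, .mem hφ, .mem hn⟩, fun hφ =>
    hs.mem_of_derivFrom (DerivFrom.neg_of_not_consistent_insert
      (mt hs.mem_of_consistent_insert hφ))⟩

lemma and_mem_iff (hs : MaximalConsistent Ax s) : φ.and ψ ∈ s ↔ φ ∈ s ∧ ψ ∈ s :=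
  ⟨fun h => ⟨hs.mem_of_derivFrom (.of_tautology_imp (Tautology.and_imp_left φ ψ) (.mem h)),
      hs.mem_of_derivFrom (.of_tautology_imp (Tautology.and_imp_right φ ψ) (.mem h))⟩,
    fun ⟨hφ, hψ⟩ => hs.mem_of_derivFrom
      ((DerivFrom.of_tautology_imp (Tautology.imp_imp_and φ ψ) (.mem hφ)).mp (.mem hψ))⟩

lemma imp_mem_iff (hs : MaximalConsistent Ax s) : φ.imp ψ ∈ s ↔ (φ ∈ s → ψ ∈ s) := by
  simp only [imp, hs.neg_mem_iff, hs.and_mem_iff]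
  tauto

lemma iffF_mem_iff (hs : MaximalConsistent Ax s) :
    φ.iffF ψ ∈ s ↔ (φ ∈ s ↔ ψ ∈ s) := by
  simp only [iffF, hs.and_mem_iff, hs.imp_mem_iff]
  exact iff_iff_implies_and_implies.symm

lemma mem_iff_of_deriv_iffF (hs : MaximalConsistent Ax s) (h : Deriv Ax (φ.iffF ψ)) :
    φ ∈ s ↔ ψ ∈ s :=
  hs.iffF_mem_iff.mp (hs.mem_of_deriv h)

lemma delta_neg_mem_iff (hs : MaximalConsistent Ax s) : delta φ.neg ∈ s ↔ delta φ ∈ s :=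
  (hs.mem_iff_of_deriv_iffF (.equ φ)).symm

end MaximalConsistent

lemma deriv_of_forall_maximalConsistent (h : ∀ s, MaximalConsistent Ax s → φ ∈ s) :
    Deriv Ax φ := by
  by_contra hφ
  have hcon : Consistent Ax (insert φ.neg ∅) := fun hinc =>
    hφ (DerivFrom.of_tautology_imp (Tautology.neg_neg_imp φ)
      (DerivFrom.neg_of_not_consistent_insert (not_not_intro hinc))).deriv_of_empty
  obtain ⟨s, hsub, hs⟩ := hcon.exists_maximalConsistent_superset
  exact hs.neg_mem_iff.mp (hsub (Set.mem_insert _ _)) (h s hs)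

abbrev CanonicalState (Ax : Set (Formula P)) : Type :=
  {s : Set (Formula P) // MaximalConsistent Ax s}

def proofSet (Ax : Set (Formula P)) (φ : Formula P) : Set (CanonicalState Ax) :=
  {s | φ ∈ s.1}

lemma proofSet_neg : proofSet Ax φ.neg = (proofSet Ax φ)ᶜ :=
  Set.ext fun s => s.2.neg_mem_iff

lemma proofSet_and : proofSet Ax (φ.and ψ) = proofSet Ax φ ∩ proofSet Ax ψ :=
  Set.ext fun s => s.2.and_mem_iff

lemma deriv_iffF_of_proofSet_eq (h : proofSet Ax φ = proofSet Ax ψ) : Deriv Ax (φ.iffF ψ) :=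
  deriv_of_forall_maximalConsistent fun s hs => hs.iffF_mem_iff.mpr (Set.ext_iff.mp h ⟨s, hs⟩)

def canonicalNbhd (Ax : Set (Formula P)) (s : CanonicalState Ax) : Set (Set (CanonicalState Ax)) :=
  proofSet Ax '' {φ | delta φ ∈ s.1}

def canonicalModel (Ax : Set (Formula P)) (hne : Nonempty (CanonicalState Ax)) : NbhdModel P :=
  ⟨CanonicalState Ax, hne, canonicalNbhd Ax, fun p => proofSet Ax (atom p)⟩

lemma proofSet_mem_canonicalNbhd_iff {s : CanonicalState Ax} :
    proofSet Ax φ ∈ canonicalNbhd Ax s ↔ delta φ ∈ s.1 := by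
  refine ⟨?_, fun h => ⟨φ, h, rfl⟩⟩
  rintro ⟨ψ, hψ, hψφ⟩
  exact (s.2.mem_iff_of_deriv_iffF (.re (deriv_iffF_of_proofSet_eq hψφ))).mp hψ

lemma truthSet_canonicalModel (hne : Nonempty (CanonicalState Ax)) (φ : Formula P) :
    (canonicalModel Ax hne).truthSet φ = proofSet Ax φ := by
  induction φ with
  | atom p => rfl
  | neg φ ih => exact (congrArg compl ih).trans proofSet_neg.symm
  | and φ ψ ih₁ ih₂ => exact (congrArg₂ (· ∩ ·) ih₁ ih₂).trans proofSet_and.symm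
  | delta φ ih =>
    have ih_neg : (canonicalModel Ax hne).truthSet φ.neg = proofSet Ax φ.neg :=
      (congrArg compl ih).trans proofSet_neg.symm
    refine Set.ext fun (s : CanonicalState Ax) => ?_
    change ((canonicalModel Ax hne).truthSet φ ∈ canonicalNbhd Ax s ∨
      (canonicalModel Ax hne).truthSet φ.neg ∈ canonicalNbhd Ax s) ↔ delta φ ∈ s.1
    rw [ih, ih_neg]
    exact (or_congr proofSet_mem_canonicalNbhd_iff proofSet_mem_canonicalNbhd_iff).trans
      (or_iff_left_of_imp s.2.delta_neg_mem_iff.mp)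

lemma sat_canonicalModel_iff {hne : Nonempty (CanonicalState Ax)} {s : CanonicalState Ax} :
    (canonicalModel Ax hne).sat s φ ↔ φ ∈ s.1 :=
  Set.ext_iff.mp (truthSet_canonicalModel hne φ) s

lemma complClosed_canonicalNbhd : ComplClosed (canonicalNbhd Ax) := by
  rintro s _ ⟨φ, hφ, rfl⟩
  exact ⟨φ.neg, s.2.delta_neg_mem_iff.mpr hφ, proofSet_neg⟩

lemma interClosed_canonicalNbhd (hC : AxDeltaC ⊆ Ax) : InterClosed (canonicalNbhd Ax) := by
  rintro s _ _ ⟨φ, hφ, rfl⟩ ⟨ψ, hψ, rfl⟩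
  have hC_inst : Deriv Ax (((delta φ).and (delta ψ)).imp (delta (φ.and ψ))) :=
    .ax (hC ⟨φ, ψ, rfl⟩)
  have hΔand : delta (φ.and ψ) ∈ s.1 :=
    s.2.imp_mem_iff.mp (s.2.mem_of_deriv hC_inst) (s.2.and_mem_iff.mpr ⟨hφ, hψ⟩)
  exact ⟨φ.and ψ, hΔand, proofSet_and⟩

lemma containsUnit_canonicalNbhd [Nonempty P] (hN : AxDeltaN P ⊆ Ax) :
    ContainsUnit (canonicalNbhd Ax) := fun s =>
  ⟨Formula.top P, s.2.mem_of_deriv (.ax (hN rfl)),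
    Set.eq_univ_of_forall fun t => t.2.mem_of_deriv (.taut Tautology.top)⟩

/-- the system ECNZ^Δ = E^Δ + ΔC + ΔN is strongly complete with respect
to the class of all (cnz)-frames. -/
theorem ECNZ_strongly_complete {P : Type} [Nonempty P]
    (Γ : Set (Formula P)) (hcon : Consistent (AxDeltaC ∪ AxDeltaN P) Γ) :
    ∃ (M : NbhdModel P) (s : M.S),
      InterClosed M.N ∧ ContainsUnit M.N ∧ ComplClosed M.N ∧ ∀ φ ∈ Γ, M.sat s φ := by
  obtain ⟨s, hΓs, hs⟩ := hcon.exists_maximalConsistent_superset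
  exact ⟨canonicalModel _ ⟨⟨s, hs⟩⟩, ⟨s, hs⟩,
    interClosed_canonicalNbhd Set.subset_union_left,
    containsUnit_canonicalNbhd Set.subset_union_right,
    complClosed_canonicalNbhd,
    fun φ hφ => sat_canonicalModel_iff.mpr (hΓs hφ)⟩
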